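/- arXiv:0812.0228 — 4 statements merged into one kernel-verified Lean document; each statement's English description precedes it below -/
import Mathlib

section
/- Let G be a group, Z a central subgroup of G, N a subgroup with G = Z·N. Then the map H ↦ N ∩ H is a bijection from the set of Howe subgroups of G onto the set of Howe subgroups of N, with inverse K ↦ Z·K. (A Howe subgroup of a group X is a subgroup equal to its double centralizer in X.) -/
/-- The centralizer of a subgroup, as a subgroup. -/
def cent {G : Type*} [Group G] (H : Subgroup G) : Subgroup G :=
  Subgroup.centralizer (H : Set G)

open Pointwise

section Aux

variable {G : Type*} [Group G] {Z N : Subgroup G}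

lemma Z_le_cent (hZ : Z ≤ Subgroup.center G) (S : Subgroup G) : Z ≤ cent S := by
  intro z hz
  exact Subgroup.mem_centralizer_iff.2 fun x _ => (Subgroup.mem_center_iff.1 (hZ hz) x)

lemma cent_sup (hZ : Z ≤ Subgroup.center G) (S : Subgroup G) :
    cent (Z ⊔ S) = cent S := by
  apply le_antisymm
  · exact Subgroup.centralizer_le (SetLike.coe_subset_coe.2 le_sup_right)
  · intro g hg
    refine Subgroup.mem_centralizer_iff.2 fun x hx => ?_
    have hsub : Z ⊔ S ≤ Subgroup.centralizer {g} := by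
      refine sup_le ?_ ?_
      · intro z hz
        exact Subgroup.mem_centralizer_iff.2 fun y hy => by
          have hyg : y = g := hy
          rw [hyg]
          exact Subgroup.mem_center_iff.1 (hZ hz) g
      · intro s hs
        exact Subgroup.mem_centralizer_iff.2 fun y hy => by
          have hyg : y = g := hy
          rw [hyg]
          exact (Subgroup.mem_centralizer_iff.1 hg s hs).symm
    have := Subgroup.mem_centralizer_iff.1 (hsub hx) g rfl
    exact this.symm

lemma decomp (hZN : ∀ g : G, ∃ z ∈ Z, ∃ n ∈ N, g = z * n)
    {H : Subgroup G} (hZH : Z ≤ H) : Z ⊔ (N ⊓ H) = H := by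
  apply le_antisymm (sup_le hZH inf_le_right)
  intro g hg
  obtain ⟨z, hz, n, hn, rfl⟩ := hZN g
  have hnH : n ∈ H := by
    have : z⁻¹ * (z * n) ∈ H := mul_mem (inv_mem (hZH hz)) hg
    simpa using this
  exact mul_mem ((le_sup_left : Z ≤ Z ⊔ (N ⊓ H)) hz)
    ((le_sup_right : N ⊓ H ≤ Z ⊔ (N ⊓ H)) ⟨hn, hnH⟩)

end Aux

/-- If `G = Z ⬝ N` with `Z` central, then `H ↦ N ⊓ H` is a bijection from the set of
Howe subgroups of `G` onto the set of Howe subgroups of `N`, with inverse `K ↦ Z ⊔ K`.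
A subgroup `H` is Howe in `G` if `C_G(C_G(H)) = H`; a subgroup `K ≤ N` is Howe in `N` if
`C_N(C_N(K)) = K`, where `C_N(X) = N ⊓ C_G(X)`. -/
theorem Howe_bijection_center_quotient {G : Type*} [Group G]
    (Z N : Subgroup G) (hZ : Z ≤ Subgroup.center G)
    (hZN : ∀ g : G, ∃ z ∈ Z, ∃ n ∈ N, g = z * n) :
    (∀ H : Subgroup G, cent (cent H) = H →
      (N ⊓ cent (N ⊓ cent (N ⊓ H)) = N ⊓ H ∧ Z ⊔ (N ⊓ H) = H)) ∧
    (∀ K : Subgroup G, K ≤ N → N ⊓ cent (N ⊓ cent K) = K →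
      (cent (cent (Z ⊔ K)) = Z ⊔ K ∧ N ⊓ (Z ⊔ K) = K)) := by
  constructor
  · intro H hH
    have hZH : Z ≤ H := hH ▸ Z_le_cent hZ (cent H)
    have hdec : Z ⊔ (N ⊓ H) = H := decomp hZN hZH
    have hcK : cent (N ⊓ H) = cent H := by
      conv_rhs => rw [← hdec]
      rw [cent_sup hZ]
    have hdecC : Z ⊔ (N ⊓ cent H) = cent H := decomp hZN (Z_le_cent hZ H)
    have h2 : cent (N ⊓ cent H) = H := by
      rw [← cent_sup hZ (N ⊓ cent H), hdecC, hH]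
    refine ⟨?_, hdec⟩
    rw [hcK, h2]
  · intro K hKN hK
    have hZcK : Z ≤ cent K := Z_le_cent hZ K
    have hdecC : Z ⊔ (N ⊓ cent K) = cent K := decomp hZN hZcK
    have hZNK : Z ⊓ N ≤ K := by
      rw [← hK]
      exact le_inf inf_le_right (inf_le_left.trans (Z_le_cent hZ (N ⊓ cent K)))
    have hZnormal : Z.Normal := by
      constructor
      intro z hz g
      have hc := Subgroup.mem_center_iff.1 (hZ hz) g
      have h : g * z * g⁻¹ = z := by rw [hc]; group
      rw [h]; exact hz
    constructor
    · have h1 : cent (Z ⊔ K) = cent K := cent_sup hZ K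
      have h2 : cent (cent K) = cent (N ⊓ cent K) := by
        conv_lhs => rw [← hdecC]
        rw [cent_sup hZ]
      have h3 : Z ⊔ (N ⊓ cent (N ⊓ cent K)) = cent (N ⊓ cent K) :=
        decomp hZN (Z_le_cent hZ (N ⊓ cent K))
      rw [h1, h2, ← h3, hK]
    · apply le_antisymm
      · intro g hg
        obtain ⟨hgN, hgZK⟩ := hg
        have hmem : g ∈ ((Z : Set G) * (K : Set G)) := by
          rw [← Subgroup.normal_mul Z K]
          exact hgZK
        obtain ⟨z, hz, k, hk, rfl⟩ := hmem
        have hzN : z ∈ N := by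
          have : (z * k) * k⁻¹ ∈ N := mul_mem hgN (inv_mem (hKN hk))
          simpa using this
        exact mul_mem (hZNK ⟨hz, hzN⟩) hk
      · exact le_inf hKN le_sup_right
end

section
/- Define, for subgroups H of a group G with a fixed normal subgroup N of index ≤ 2, the operators C(H) = C_G(H), S(H) = N ∩ H, and M(H) = C(C(S(H))). Then M is idempotent: M(M(H)) = M(H) for every subgroup H. -/
/-- The operator `M(H) = C_G(C_G(N ∩ H))`. -/
def Mop {G : Type*} [Group G] (N H : Subgroup G) : Subgroup G :=
  cent (cent (N ⊓ H))

lemma cent_anti {G : Type*} [Group G] {H K : Subgroup G} (h : H ≤ K) :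
    cent K ≤ cent H :=
  Subgroup.centralizer_le h

lemma le_cent_cent {G : Type*} [Group G] (H : Subgroup G) :
    H ≤ cent (cent H) := fun x hx y hy => (hy x hx).symm

lemma cent_cent_cent {G : Type*} [Group G] (H : Subgroup G) :
    cent (cent (cent H)) = cent H :=
  le_antisymm (cent_anti (le_cent_cent H)) (le_cent_cent (cent H))

/-- For a normal subgroup `N` of index at most 2, the operator
`M = C ∘ C ∘ S` (with `C` the centralizer in `G` and `S` intersection with `N`)
is idempotent on subgroups of `G`. -/
theorem Mop_idempotent {G : Type*} [Group G] (N : Subgroup G) [N.Normal]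
    (hN : N.index ≤ 2) (H : Subgroup G) :
    Mop N (Mop N H) = Mop N H := by
  unfold Mop
  apply le_antisymm
  · have h1 : N ⊓ cent (cent (N ⊓ H)) ≤ cent (cent (N ⊓ H)) := inf_le_right
    have := cent_anti (cent_anti h1)
    calc cent (cent (N ⊓ cent (cent (N ⊓ H))))
        ≤ cent (cent (cent (cent (N ⊓ H)))) := this
      _ = cent (cent (N ⊓ H)) := by rw [cent_cent_cent]
  · have h2 : N ⊓ H ≤ N ⊓ cent (cent (N ⊓ H)) :=
      le_inf inf_le_left (le_cent_cent _)
    exact cent_anti (cent_anti h2)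
end

section
/- With the operators C, S, M as above (C = centralizer in G, S = intersection with the normal subgroup N, M = C∘C∘S): if K is a Howe subgroup of G (i.e. C(C(K)) = K), then S(M(K)) = S(K). -/
/-- If `K` is a Howe subgroup of `G`, then `S(M(K)) = S(K)`, where `S` denotes
intersection with the normal subgroup `N` and `M = C ∘ C ∘ S`. -/
theorem S_Mop_eq_S_on_Howe {G : Type*} [Group G] (N : Subgroup G) [N.Normal]
    (K : Subgroup G) (hK : cent (cent K) = K) :
    N ⊓ Mop N K = N ⊓ K := by
  apply le_antisymm
  · exact le_inf inf_le_left <| inf_le_right.trans <|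
      (cent_anti (cent_anti inf_le_right)).trans hK.le
  · exact le_inf inf_le_left (le_cent_cent _)
end

section
/- Let G be a group and N a normal subgroup. Let H be a subgroup of G that is stable under M, i.e. H = C_G(C_G(N ∩ H)). Then N ∩ H is a Howe subgroup of N (i.e. C_N(C_N(N∩H)) = N∩H) if and only if H = M(C_G(M(C_G(H)))), where M(K) := C_G(C_G(N ∩ K)). -/
/-- Let `N ⊴ G` and let `H` be an `M`-stable subgroup of `G` (i.e. `H = M(H)`).
Then `N ⊓ H` is a Howe subgroup of `N` (i.e. `C_N(C_N(N ⊓ H)) = N ⊓ H`, with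
`C_N(X) = N ⊓ C_G(X)`) if and only if `H = (M ∘ C)² H`. -/
theorem inf_Howe_iff_MC_sq_stable {G : Type*} [Group G] (N : Subgroup G) [N.Normal]
    (H : Subgroup G) (hM : H = Mop N H) :
    (N ⊓ cent (N ⊓ cent (N ⊓ H)) = N ⊓ H) ↔
      H = Mop N (cent (Mop N (cent H))) := by
  set A := N ⊓ H with hA
  have hMH : H = cent (cent A) := hM
  have hCH : cent H = cent A := by
    rw [hMH, cent_cent_cent]
  set B := N ⊓ cent A with hB
  have hNA : N ⊓ cent H = B := by rw [hCH]
  have key : Mop N (cent (Mop N (cent H))) = cent (cent (N ⊓ cent B)) := by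
    unfold Mop
    rw [hNA, cent_cent_cent]
  rw [key]
  constructor
  · intro h
    rw [show (N ⊓ cent B : Subgroup G) = A from h, ← hMH]
  · intro h
    apply le_antisymm
    · have hle : N ⊓ cent B ≤ cent (cent (N ⊓ cent B)) := le_cent_cent _
      rw [← h] at hle
      exact le_inf inf_le_left hle
    · refine le_inf inf_le_left ?_
      have : A ≤ cent B := (cent_anti inf_le_right).trans' (le_cent_cent A)
      exact this
end
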